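/- arXiv:2411.06209 — 2 statements merged into one kernel-verified Lean document; each statement's English description precedes it below -/
import Mathlib

section
/- Let γ, γ̃ ∈ ℝ. Suppose the γ-shifted system has a dichotomy on a splitting (L1,L2) and the γ̃-shifted system has a dichotomy on a splitting (L̃1,L̃2). If dim L1 = dim L̃1, then L1 = L̃1. -/
open Set Filter Topology

noncomputable section

abbrev Euc (d : ℕ) := EuclideanSpace ℝ (Fin d)

/-- The solution `x(n, x₀)` of `x(n+1) = A(n) x(n)`, `x(0,x₀) = x₀`. -/
def sol {d : ℕ} (A : ℕ → (Euc d ≃L[ℝ] Euc d)) : ℕ → Euc d → Euc d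
  | 0, x => x
  | n + 1, x => A n (sol A n x)

/-- Boundedness of the coefficients `A(n)` and their inverses. -/
def BddSys {d : ℕ} (A : ℕ → (Euc d ≃L[ℝ] Euc d)) : Prop :=
  (∃ c : ℝ, ∀ n : ℕ, ‖(A n : Euc d →L[ℝ] Euc d)‖ ≤ c) ∧
  (∃ c : ℝ, ∀ n : ℕ, ‖((A n).symm : Euc d →L[ℝ] Euc d)‖ ≤ c)

/-- `D1(γ,U)` holds uniformly (constant `C`). -/
def D1u {d : ℕ} (A : ℕ → (Euc d ≃L[ℝ] Euc d)) (γ : ℝ) (U : Submodule ℝ (Euc d)) : Prop :=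
  ∃ C : ℝ, 0 < C ∧
    ∀ m n : ℕ, m ≤ n → ∀ x₀ ∈ U,
      ‖sol A n x₀‖ ≤ C * Real.exp (γ * ((n : ℝ) - (m : ℝ))) * ‖sol A m x₀‖

/-- `D2(γ,U)` holds uniformly (constant `C`). -/
def D2u {d : ℕ} (A : ℕ → (Euc d ≃L[ℝ] Euc d)) (γ : ℝ) (U : Submodule ℝ (Euc d)) : Prop :=
  ∃ C : ℝ, 0 < C ∧
    ∀ m n : ℕ, m ≤ n → ∀ x₀ ∈ U,
      C * Real.exp (γ * ((n : ℝ) - (m : ℝ))) * ‖sol A m x₀‖ ≤ ‖sol A n x₀‖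

/-- `𝒰` is a set of subspaces of `L` whose union is `L`. -/
def IsCover {d : ℕ} (𝒰 : Set (Submodule ℝ (Euc d))) (L : Submodule ℝ (Euc d)) : Prop :=
  (∀ U ∈ 𝒰, U ≤ L) ∧ (⋃ U ∈ 𝒰, (U : Set (Euc d))) = (L : Set (Euc d))

/-- The `γ`-shifted system `x(n+1) = e^{-γ} A(n) x(n)` has a dichotomy on the
splitting `(L1,L2)`. -/
def ShiftedDichotomy {d : ℕ} (A : ℕ → (Euc d ≃L[ℝ] Euc d)) (γ : ℝ)
    (L1 L2 : Submodule ℝ (Euc d)) : Prop :=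
  IsCompl L1 L2 ∧
  ∃ 𝒰1 𝒰2 : Set (Submodule ℝ (Euc d)), IsCover 𝒰1 L1 ∧ IsCover 𝒰2 L2 ∧
    ∃ α : ℝ, 0 < α ∧ (∀ U ∈ 𝒰1, D1u A (γ - α) U) ∧ (∀ U ∈ 𝒰2, D2u A (γ + α) U)

/-!
Suppose `γ ≤ γ'` and write `x ∈ L1` as `y + z` with `y ∈ L1'`, `z ∈ L2'`. The solutions through
`x` and `y` grow at an exponential rate below `γ'`, whereas the solution through `z`, being their
difference, would grow at a rate above `γ'` unless `z = 0`. Hence `L1 ≤ L1'`, and equal dimensions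
give `L1 = L1'`.
-/

open Real

variable {d : ℕ} {A : ℕ → (Euc d ≃L[ℝ] Euc d)}

lemma sol_add (n : ℕ) (x y : Euc d) :
    sol A n (x + y) = sol A n x + sol A n y := by
  induction n with
  | zero => rfl
  | succ n ih => simp [sol, ih, map_add]

lemma tendsto_exp_mul_natCast_of_neg {c : ℝ} (hc : c < 0) :
    Tendsto (fun n : ℕ => exp (c * n)) atTop (𝓝 0) := by
  simpa only [mul_comm c, exp_nat_mul] using
    tendsto_pow_atTop_nhds_zero_of_lt_one (exp_pos c).le (exp_lt_one_iff.mpr hc)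

lemma nonpos_of_mul_exp_le_add {r a b c K₁ K₂ : ℝ} (ha : a < c) (hb : b < c)
    (h : ∀ n : ℕ, r * exp (c * n) ≤ K₁ * exp (a * n) + K₂ * exp (b * n)) : r ≤ 0 := by
  have hbound : ∀ n : ℕ, r ≤ K₁ * exp ((a - c) * n) + K₂ * exp ((b - c) * n) := by
    intro n
    rw [← mul_le_mul_iff_of_pos_right (exp_pos (c * n))]
    calc r * exp (c * n) ≤ K₁ * exp (a * n) + K₂ * exp (b * n) := h n
      _ = (K₁ * exp ((a - c) * n) + K₂ * exp ((b - c) * n)) * exp (c * n) := by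
        rw [add_mul, mul_assoc, mul_assoc, ← exp_add, ← exp_add]
        ring_nf
  have hlim : Tendsto (fun n : ℕ => K₁ * exp ((a - c) * n) + K₂ * exp ((b - c) * n))
      atTop (𝓝 0) := by
    simpa using ((tendsto_exp_mul_natCast_of_neg (sub_neg.mpr ha)).const_mul K₁).add
      ((tendsto_exp_mul_natCast_of_neg (sub_neg.mpr hb)).const_mul K₂)
  exact ge_of_tendsto' hlim hbound

lemma IsCover.exists_mem {𝒰 : Set (Submodule ℝ (Euc d))} {L : Submodule ℝ (Euc d)}
    (h𝒰 : IsCover 𝒰 L) {x : Euc d} (hx : x ∈ L) : ∃ U ∈ 𝒰, x ∈ U := by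
  have hx' : x ∈ ⋃ U ∈ 𝒰, (U : Set (Euc d)) := h𝒰.2 ▸ hx
  simpa only [mem_iUnion, SetLike.mem_coe, exists_prop] using hx'

namespace ShiftedDichotomy

variable {γ : ℝ} {L1 L2 : Submodule ℝ (Euc d)}

lemma exists_norm_sol_le (h : ShiftedDichotomy A γ L1 L2) {x : Euc d} (hx : x ∈ L1) :
    ∃ a < γ, ∃ C : ℝ, ∀ n : ℕ, ‖sol A n x‖ ≤ C * exp (a * n) * ‖x‖ := by
  obtain ⟨-, 𝒰1, -, h𝒰1, -, α, hα, hD1, -⟩ := h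
  obtain ⟨U, hU, hxU⟩ := h𝒰1.exists_mem hx
  obtain ⟨C, -, hC⟩ := hD1 U hU
  exact ⟨γ - α, by linarith, C, fun n => by simpa [sol] using hC 0 n n.zero_le x hxU⟩

lemma exists_le_norm_sol (h : ShiftedDichotomy A γ L1 L2) {x : Euc d} (hx : x ∈ L2) :
    ∃ b > γ, ∃ C > 0, ∀ n : ℕ, C * exp (b * n) * ‖x‖ ≤ ‖sol A n x‖ := by
  obtain ⟨-, -, 𝒰2, -, h𝒰2, α, hα, -, hD2⟩ := h
  obtain ⟨U, hU, hxU⟩ := h𝒰2.exists_mem hx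
  obtain ⟨C, hC0, hC⟩ := hD2 U hU
  exact ⟨γ + α, by linarith, C, hC0, fun n => by simpa [sol] using hC 0 n n.zero_le x hxU⟩

lemma fst_le_fst_of_le {γ' : ℝ} {L1' L2' : Submodule ℝ (Euc d)} (h : ShiftedDichotomy A γ L1 L2)
    (h' : ShiftedDichotomy A γ' L1' L2') (hγ : γ ≤ γ') : L1 ≤ L1' := by
  intro x hx
  obtain ⟨y, z, hy, hz, rfl⟩ := Submodule.codisjoint_iff_exists_add_eq.mp h'.1.codisjoint x
  obtain ⟨a, ha, C₁, hx'⟩ := h.exists_norm_sol_le hx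
  obtain ⟨a', ha', C₂, hy'⟩ := h'.exists_norm_sol_le hy
  obtain ⟨b, hb, C₃, hC₃, hz'⟩ := h'.exists_le_norm_sol hz
  have hz0 : C₃ * ‖z‖ ≤ 0 := by
    refine nonpos_of_mul_exp_le_add (K₁ := C₁ * ‖y + z‖) (K₂ := C₂ * ‖y‖)
      (by linarith : a < b) (by linarith : a' < b) fun n => ?_
    have hsub : sol A n z = sol A n (y + z) - sol A n y := by rw [sol_add]; abel
    calc C₃ * ‖z‖ * exp (b * n) = C₃ * exp (b * n) * ‖z‖ := by ring
      _ ≤ ‖sol A n (y + z)‖ + ‖sol A n y‖ := (hz' n).trans (hsub ▸ norm_sub_le _ _)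
      _ ≤ C₁ * exp (a * n) * ‖y + z‖ + C₂ * exp (a' * n) * ‖y‖ := add_le_add (hx' n) (hy' n)
      _ = C₁ * ‖y + z‖ * exp (a * n) + C₂ * ‖y‖ * exp (a' * n) := by ring
  have : z = 0 := norm_le_zero_iff.mp (nonpos_of_mul_nonpos_right hz0 hC₃)
  simpa [this] using hy

end ShiftedDichotomy

theorem dichotomy_subspace_unique_general {d : ℕ}
    (A : ℕ → (Euc d ≃L[ℝ] Euc d))
    (γ γ' : ℝ) (L1 L2 L1' L2' : Submodule ℝ (Euc d))
    (h : ShiftedDichotomy A γ L1 L2) (h' : ShiftedDichotomy A γ' L1' L2')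
    (hrank : Module.finrank ℝ L1 = Module.finrank ℝ L1') :
    L1 = L1' := by
  rcases le_total γ γ' with hγ | hγ
  · exact Submodule.eq_of_le_of_finrank_eq (h.fst_le_fst_of_le h' hγ) hrank
  · exact (Submodule.eq_of_le_of_finrank_eq (h'.fst_le_fst_of_le h hγ) hrank.symm).symm

/-- **Uniqueness of dichotomy subspaces.** -/
theorem dichotomy_subspace_unique {d : ℕ} (hd : 1 ≤ d)
    (A : ℕ → (Euc d ≃L[ℝ] Euc d)) (hA : BddSys A)
    (γ γ' : ℝ) (L1 L2 L1' L2' : Submodule ℝ (Euc d))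
    (h : ShiftedDichotomy A γ L1 L2) (h' : ShiftedDichotomy A γ' L1' L2')
    (hrank : Module.finrank ℝ L1 = Module.finrank ℝ L1') :
    L1 = L1' :=
  dichotomy_subspace_unique_general A γ γ' L1 L2 L1' L2' h h' hrank

end
end

section
/- Let J = ((j_{1,0},j_{2,0}),…,(j_{1,d},j_{2,d})) be admissible uniformity dimensions. Then ρ_J(A) = ⋃_{k=0}^{d} (β̄_{k,j_{1,k}}, β̲_{k,j_{2,k}}), where the intervals are open intervals in the extended reals intersected with ℝ (in particular β̄_{0,0} = −∞ and β̲_{d,0} = +∞, so the first interval is (−∞, β̲_{0,j_{2,0}}) and the last is (β̄_{d,j_{1,d}}, ∞)). -/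
open Set Filter Topology

noncomputable section

/-- `𝒢_j(L)` : the set of `j`-dimensional subspaces of `L`. -/
def Gr {d : ℕ} (j : ℕ) (L : Submodule ℝ (Euc d)) : Set (Submodule ℝ (Euc d)) :=
  {U | U ≤ L ∧ Module.finrank ℝ U = j}

/-- Upper Bohl exponent `β̄(U)` (with the convention `sSup ∅ = -∞` in `EReal`). -/
def upperBohl {d : ℕ} (A : ℕ → (Euc d ≃L[ℝ] Euc d)) (U : Submodule ℝ (Euc d)) : EReal :=
  ⨅ N : ℕ, sSup {r : EReal | ∃ m n : ℕ, ∃ x₀ ∈ U, x₀ ≠ 0 ∧ N < n - m ∧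
    r = ((((n : ℝ) - (m : ℝ))⁻¹ * Real.log (‖sol A n x₀‖ / ‖sol A m x₀‖) : ℝ) : EReal)}

/-- Lower Bohl exponent `β̲(U)` (with the convention `sInf ∅ = +∞` in `EReal`). -/
def lowerBohl {d : ℕ} (A : ℕ → (Euc d ≃L[ℝ] Euc d)) (U : Submodule ℝ (Euc d)) : EReal :=
  ⨆ N : ℕ, sInf {r : EReal | ∃ m n : ℕ, ∃ x₀ ∈ U, x₀ ≠ 0 ∧ N < n - m ∧
    r = ((((n : ℝ) - (m : ℝ))⁻¹ * Real.log (‖sol A n x₀‖ / ‖sol A m x₀‖) : ℝ) : EReal)}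

/-- Limiting upper Bohl exponent `β̄_{k,j}`. -/
def upperBohlLim {d : ℕ} (A : ℕ → (Euc d ≃L[ℝ] Euc d)) (k j : ℕ) : EReal :=
  ⨅ L ∈ {L : Submodule ℝ (Euc d) | Module.finrank ℝ L = k},
    ⨆ U ∈ Gr j L, upperBohl A U

/-- Limiting lower Bohl exponent `β̲_{k,j}`. -/
def lowerBohlLim {d : ℕ} (A : ℕ → (Euc d ≃L[ℝ] Euc d)) (k j : ℕ) : EReal :=
  ⨆ L ∈ {L : Submodule ℝ (Euc d) | Module.finrank ℝ L = d - k},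
    ⨅ U ∈ Gr j L, lowerBohl A U

/-- The `γ`-shifted system has a dichotomy on the splitting `(L1,L2)` with uniformity
dimensions `(j1,j2)`. -/
def DichotomyDim {d : ℕ} (A : ℕ → (Euc d ≃L[ℝ] Euc d)) (γ : ℝ)
    (L1 L2 : Submodule ℝ (Euc d)) (j1 j2 : ℕ) : Prop :=
  IsCompl L1 L2 ∧ IsCover (Gr j1 L1) L1 ∧ IsCover (Gr j2 L2) L2 ∧
  ∃ α : ℝ, 0 < α ∧ (∀ U ∈ Gr j1 L1, D1u A (γ - α) U) ∧ (∀ U ∈ Gr j2 L2, D2u A (γ + α) U)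

/-- `(j1,j2)` is `k`-admissible. -/
def KAdmissible (d k j1 j2 : ℕ) : Prop :=
  (k = 0 → j1 = 0 ∧ 1 ≤ j2 ∧ j2 ≤ d) ∧
  (1 ≤ k → k ≤ d - 1 → 1 ≤ j1 ∧ j1 ≤ k ∧ 1 ≤ j2 ∧ j2 ≤ d - k) ∧
  (k = d → 1 ≤ j1 ∧ j1 ≤ d ∧ j2 = 0)

/-- The dichotomy resolvent `ρ_J(A)`. -/
def dichRes {d : ℕ} (A : ℕ → (Euc d ≃L[ℝ] Euc d)) (J : ℕ → ℕ × ℕ) : Set ℝ :=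
  {γ | ∃ L1 L2 : Submodule ℝ (Euc d),
    DichotomyDim A γ L1 L2 (J (Module.finrank ℝ L1)).1 (J (Module.finrank ℝ L1)).2}


section Aux

variable {d : ℕ} (A : ℕ → (Euc d ≃L[ℝ] Euc d))

lemma sol_zero (n : ℕ) : sol A n (0 : Euc d) = 0 := by
  induction n with
  | zero => rfl
  | succ n ih => simp [sol, ih]

lemma sol_ne_zero {x : Euc d} (hx : x ≠ 0) (n : ℕ) : sol A n x ≠ 0 := by
  induction n with
  | zero => exact hx
  | succ n ih => simpa [sol] using ih

lemma norm_sol_le_pow {M : ℝ} (hM0 : 0 ≤ M)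
    (hM : ∀ (n : ℕ) (x : Euc d), ‖(A n) x‖ ≤ M * ‖x‖) (m k : ℕ) (x : Euc d) :
    ‖sol A (m + k) x‖ ≤ M ^ k * ‖sol A m x‖ := by
  induction k with
  | zero => simp
  | succ k ih =>
      have h1 : ‖sol A (m + k + 1) x‖ ≤ M * ‖sol A (m + k) x‖ := hM _ _
      calc ‖sol A (m + (k+1)) x‖ = ‖sol A (m + k + 1) x‖ := by ring_nf
        _ ≤ M * ‖sol A (m + k) x‖ := h1
        _ ≤ M * (M ^ k * ‖sol A m x‖) := mul_le_mul_of_nonneg_left ih hM0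
        _ = M ^ (k+1) * ‖sol A m x‖ := by ring

lemma norm_sol_ge_pow {M : ℝ} (hM0 : 0 ≤ M)
    (hM : ∀ (n : ℕ) (x : Euc d), ‖(A n).symm x‖ ≤ M * ‖x‖) (m k : ℕ) (x : Euc d) :
    ‖sol A m x‖ ≤ M ^ k * ‖sol A (m + k) x‖ := by
  induction k with
  | zero => simp
  | succ k ih =>
      have h1 : sol A (m + k) x = (A (m + k)).symm (sol A (m + k + 1) x) := by
        simp [sol]
      calc ‖sol A m x‖ ≤ M ^ k * ‖sol A (m + k) x‖ := ih
        _ ≤ M ^ k * (M * ‖sol A (m + k + 1) x‖) := by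
            refine mul_le_mul_of_nonneg_left ?_ (pow_nonneg hM0 k)
            rw [h1]; exact hM _ _
        _ = M ^ (k+1) * ‖sol A (m + (k+1)) x‖ := by ring_nf

/-- The defining set of the Bohl exponents. -/
def bohlSet (U : Submodule ℝ (Euc d)) (N : ℕ) : Set EReal :=
  {r : EReal | ∃ m n : ℕ, ∃ x₀ ∈ U, x₀ ≠ 0 ∧ N < n - m ∧
    r = ((((n : ℝ) - (m : ℝ))⁻¹ * Real.log (‖sol A n x₀‖ / ‖sol A m x₀‖) : ℝ) : EReal)}

lemma upperBohl_eq (U : Submodule ℝ (Euc d)) :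
    upperBohl A U = ⨅ N : ℕ, sSup (bohlSet A U N) := rfl

lemma lowerBohl_eq (U : Submodule ℝ (Euc d)) :
    lowerBohl A U = ⨆ N : ℕ, sInf (bohlSet A U N) := rfl

lemma cast_sub_pos {m n N : ℕ} (h : N < n - m) :
    ((N : ℝ) + 1 ≤ (n : ℝ) - (m : ℝ)) ∧ (0 < (n : ℝ) - (m : ℝ)) ∧ m ≤ n := by
  have hmn : m ≤ n := by omega
  have h1 : (N : ℝ) + 1 ≤ ((n - m : ℕ) : ℝ) := by exact_mod_cast h
  rw [Nat.cast_sub hmn] at h1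
  exact ⟨h1, lt_of_lt_of_le (by positivity) h1, hmn⟩

lemma upperBohl_le_of_D1u {β : ℝ} {U : Submodule ℝ (Euc d)} (h : D1u A β U) :
    upperBohl A U ≤ (β : EReal) := by
  obtain ⟨C, hC, hD⟩ := h
  by_contra hlt
  push_neg at hlt
  obtain ⟨r, hr1, hr2⟩ := EReal.exists_between_coe_real hlt
  have hβr : β < r := by exact_mod_cast hr1
  set c : ℝ := Real.log (max C 1) with hc
  have hc0 : 0 ≤ c := Real.log_nonneg (le_max_right _ _)
  obtain ⟨N, hN⟩ := exists_nat_gt (c / (r - β))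
  have hrb : 0 < r - β := sub_pos.mpr hβr
  have hdiv : c / ((N : ℝ) + 1) < r - β := by
    rw [div_lt_iff₀ (by positivity)]
    have h2 : c < (N : ℝ) * (r - β) := by
      rw [div_lt_iff₀ hrb] at hN; linarith
    nlinarith
  have hsup : sSup (bohlSet A U N) ≤ ((β + c / ((N : ℝ) + 1) : ℝ) : EReal) := by
    apply sSup_le
    rintro s ⟨m, n, x₀, hxU, hx0, hmn, rfl⟩
    obtain ⟨ht1, ht0, hmle⟩ := cast_sub_pos hmn
    set t : ℝ := (n : ℝ) - (m : ℝ) with hts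
    have hmpos : 0 < ‖sol A m x₀‖ := norm_pos_iff.mpr (sol_ne_zero A hx0 m)
    have hnpos : 0 < ‖sol A n x₀‖ := norm_pos_iff.mpr (sol_ne_zero A hx0 n)
    have hratio : ‖sol A n x₀‖ / ‖sol A m x₀‖ ≤ max C 1 * Real.exp (β * t) := by
      rw [div_le_iff₀ hmpos]
      calc ‖sol A n x₀‖ ≤ C * Real.exp (β * t) * ‖sol A m x₀‖ := hD m n hmle x₀ hxU
        _ ≤ max C 1 * Real.exp (β * t) * ‖sol A m x₀‖ := by
            have := le_max_left C 1
            have h3 : (0:ℝ) ≤ Real.exp (β * t) * ‖sol A m x₀‖ := by positivity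
            nlinarith
      
    have hlog : Real.log (‖sol A n x₀‖ / ‖sol A m x₀‖) ≤ c + β * t := by
      calc Real.log (‖sol A n x₀‖ / ‖sol A m x₀‖)
          ≤ Real.log (max C 1 * Real.exp (β * t)) :=
            Real.log_le_log (div_pos hnpos hmpos) hratio
        _ = c + β * t := by
            rw [Real.log_mul (by positivity) (Real.exp_ne_zero _), Real.log_exp]
    have hkey : t⁻¹ * Real.log (‖sol A n x₀‖ / ‖sol A m x₀‖) ≤ β + c / ((N : ℝ) + 1) := by
      have h4 : t⁻¹ * Real.log (‖sol A n x₀‖ / ‖sol A m x₀‖) ≤ t⁻¹ * (c + β * t) :=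
        mul_le_mul_of_nonneg_left hlog (inv_nonneg.mpr ht0.le)
      have h5 : t⁻¹ * (c + β * t) = c / t + β := by
        field_simp
      have h6 : c / t ≤ c / ((N : ℝ) + 1) := by
        apply div_le_div_of_nonneg_left hc0 (by positivity) ht1
      linarith
    exact_mod_cast hkey
  have hfin : upperBohl A U ≤ ((β + c / ((N : ℝ) + 1) : ℝ) : EReal) :=
    le_trans (iInf_le _ N) hsup
  have : upperBohl A U < (r : EReal) :=
    lt_of_le_of_lt hfin (by exact_mod_cast (by linarith : β + c / ((N : ℝ) + 1) < r))
  exact absurd hr2 (not_lt.mpr this.le)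

lemma lowerBohl_ge_of_D2u {β : ℝ} {U : Submodule ℝ (Euc d)} (h : D2u A β U) :
    (β : EReal) ≤ lowerBohl A U := by
  obtain ⟨C, hC, hD⟩ := h
  by_contra hlt
  push_neg at hlt
  obtain ⟨r, hr1, hr2⟩ := EReal.exists_between_coe_real hlt
  have hβr : r < β := by exact_mod_cast hr2
  set c : ℝ := |Real.log C| with hc
  have hc0 : 0 ≤ c := abs_nonneg _
  obtain ⟨N, hN⟩ := exists_nat_gt (c / (β - r))
  have hrb : 0 < β - r := sub_pos.mpr hβr
  have hdiv : c / ((N : ℝ) + 1) < β - r := by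
    rw [div_lt_iff₀ (by positivity)]
    have h2 : c < (N : ℝ) * (β - r) := by
      rw [div_lt_iff₀ hrb] at hN; linarith
    nlinarith
  have hinf : ((β - c / ((N : ℝ) + 1) : ℝ) : EReal) ≤ sInf (bohlSet A U N) := by
    apply le_sInf
    rintro s ⟨m, n, x₀, hxU, hx0, hmn, rfl⟩
    obtain ⟨ht1, ht0, hmle⟩ := cast_sub_pos hmn
    set t : ℝ := (n : ℝ) - (m : ℝ) with hts
    have hmpos : 0 < ‖sol A m x₀‖ := norm_pos_iff.mpr (sol_ne_zero A hx0 m)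
    have hnpos : 0 < ‖sol A n x₀‖ := norm_pos_iff.mpr (sol_ne_zero A hx0 n)
    have hratio : C * Real.exp (β * t) ≤ ‖sol A n x₀‖ / ‖sol A m x₀‖ := by
      rw [le_div_iff₀ hmpos]
      exact hD m n hmle x₀ hxU
    have hlog : Real.log C + β * t ≤ Real.log (‖sol A n x₀‖ / ‖sol A m x₀‖) := by
      calc Real.log C + β * t = Real.log (C * Real.exp (β * t)) := by
            rw [Real.log_mul (ne_of_gt hC) (Real.exp_ne_zero _), Real.log_exp]
        _ ≤ Real.log (‖sol A n x₀‖ / ‖sol A m x₀‖) :=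
            Real.log_le_log (by positivity) hratio
    have hkey : β - c / ((N : ℝ) + 1) ≤ t⁻¹ * Real.log (‖sol A n x₀‖ / ‖sol A m x₀‖) := by
      have h4 : t⁻¹ * (Real.log C + β * t) ≤
          t⁻¹ * Real.log (‖sol A n x₀‖ / ‖sol A m x₀‖) :=
        mul_le_mul_of_nonneg_left hlog (inv_nonneg.mpr ht0.le)
      have h5 : t⁻¹ * (Real.log C + β * t) = Real.log C / t + β := by
        field_simp
      have h6 : -(c / ((N : ℝ) + 1)) ≤ Real.log C / t := by
        have e1 : -c ≤ Real.log C := neg_abs_le _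
        have e2 : (-c) / t ≤ Real.log C / t := by gcongr
        have e3 : c / t ≤ c / ((N : ℝ) + 1) :=
          div_le_div_of_nonneg_left hc0 (by positivity) ht1
        have e4 : (-c) / t = -(c / t) := neg_div t c
        linarith
      linarith
    exact_mod_cast hkey
  have hfin : ((β - c / ((N : ℝ) + 1) : ℝ) : EReal) ≤ lowerBohl A U :=
    le_trans hinf (by rw [lowerBohl_eq]; exact le_iSup (fun N => sInf (bohlSet A U N)) N)
  have : (r : EReal) < lowerBohl A U :=
    lt_of_lt_of_le (by exact_mod_cast (by linarith : r < β - c / ((N : ℝ) + 1))) hfin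
  exact absurd hr1 (not_lt.mpr this.le)


lemma sol_time_zero (x : Euc d) : sol A 0 x = x := rfl

lemma D1u_of_upperBohl_lt (hA : BddSys A) {β : ℝ} {U : Submodule ℝ (Euc d)}
    (h : upperBohl A U < (β : EReal)) : D1u A β U := by
  rw [upperBohl_eq] at h
  obtain ⟨N, hN⟩ := iInf_lt_iff.mp h
  obtain ⟨c, hcb⟩ := hA.1
  set M : ℝ := max c 1 with hMdef
  have hM1 : (1:ℝ) ≤ M := le_max_right _ _
  have hM : ∀ (n : ℕ) (x : Euc d), ‖(A n) x‖ ≤ M * ‖x‖ := by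
    intro n x
    calc ‖(A n) x‖ = ‖((A n : Euc d →L[ℝ] Euc d)) x‖ := rfl
      _ ≤ ‖(A n : Euc d →L[ℝ] Euc d)‖ * ‖x‖ := (A n : Euc d →L[ℝ] Euc d).le_opNorm x
      _ ≤ M * ‖x‖ :=
          mul_le_mul_of_nonneg_right (le_trans (hcb n) (le_max_left _ _)) (norm_nonneg _)
  have hMN1 : (1:ℝ) ≤ M ^ N := by
    have := pow_le_pow_left₀ zero_le_one hM1 N
    simpa using this
  refine ⟨M ^ N * Real.exp (|β| * N), by positivity, ?_⟩
  intro m n hmn x₀ hxU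
  by_cases hx0 : x₀ = 0
  · simp [hx0, sol_zero]
  have ht0 : (0:ℝ) ≤ (n:ℝ) - m := sub_nonneg.mpr (Nat.cast_le.mpr hmn)
  by_cases hgap : n - m ≤ N
  · have hle : ‖sol A n x₀‖ ≤ M ^ (n - m) * ‖sol A m x₀‖ := by
      have h0 := norm_sol_le_pow A (by linarith : (0:ℝ) ≤ M) hM m (n - m) x₀
      rwa [Nat.add_sub_cancel' hmn] at h0
    have h1 : M ^ (n - m) ≤ M ^ N := pow_le_pow_right₀ hM1 hgap
    have htN : (n:ℝ) - m ≤ N := by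
      have h2 : ((n - m : ℕ) : ℝ) ≤ N := Nat.cast_le.mpr hgap
      rwa [Nat.cast_sub hmn] at h2
    have hexp : 1 ≤ Real.exp (|β| * N + β * ((n:ℝ) - m)) := by
      apply Real.one_le_exp
      have h3 := mul_le_mul_of_nonneg_right (neg_abs_le β) ht0
      nlinarith [abs_nonneg β]
    calc ‖sol A n x₀‖ ≤ M ^ (n-m) * ‖sol A m x₀‖ := hle
      _ ≤ M ^ N * ‖sol A m x₀‖ := mul_le_mul_of_nonneg_right h1 (norm_nonneg _)
      _ ≤ M ^ N * Real.exp (|β| * N + β * ((n:ℝ) - m)) * ‖sol A m x₀‖ := by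
          have h0 : (0:ℝ) ≤ M ^ N := by positivity
          nlinarith [mul_nonneg h0 (norm_nonneg (sol A m x₀))]
      _ = M ^ N * Real.exp (|β| * N) * Real.exp (β * ((n:ℝ) - m)) * ‖sol A m x₀‖ := by
          rw [Real.exp_add]; ring
  · push_neg at hgap
    obtain ⟨ht1, htpos, hmle⟩ := cast_sub_pos hgap
    have hmpos : 0 < ‖sol A m x₀‖ := norm_pos_iff.mpr (sol_ne_zero A hx0 m)
    have hnpos : 0 < ‖sol A n x₀‖ := norm_pos_iff.mpr (sol_ne_zero A hx0 n)
    have hmem : ((((n : ℝ) - (m : ℝ))⁻¹ *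
        Real.log (‖sol A n x₀‖ / ‖sol A m x₀‖) : ℝ) : EReal) ∈ bohlSet A U N :=
      ⟨m, n, x₀, hxU, hx0, hgap, rfl⟩
    have hltr : ((n : ℝ) - (m : ℝ))⁻¹ * Real.log (‖sol A n x₀‖ / ‖sol A m x₀‖) < β := by
      exact_mod_cast lt_of_le_of_lt (le_sSup hmem) hN
    have hlog : Real.log (‖sol A n x₀‖ / ‖sol A m x₀‖) < β * ((n:ℝ) - m) := by
      have h4 := (mul_lt_mul_iff_right₀ htpos).mpr hltr
      rwa [← mul_assoc, mul_inv_cancel₀ (ne_of_gt htpos), one_mul, mul_comm] at h4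
    have hr2 : ‖sol A n x₀‖ / ‖sol A m x₀‖ < Real.exp (β * ((n:ℝ) - m)) :=
      (Real.log_lt_iff_lt_exp (div_pos hnpos hmpos)).mp hlog
    have h5 : ‖sol A n x₀‖ < Real.exp (β * ((n:ℝ) - m)) * ‖sol A m x₀‖ :=
      (div_lt_iff₀ hmpos).mp hr2
    have hC1 : 1 ≤ M ^ N * Real.exp (|β| * N) := by
      nlinarith [Real.one_le_exp (by positivity : (0:ℝ) ≤ |β| * N)]
    have h6 : 1 * (Real.exp (β * ((n:ℝ) - m)) * ‖sol A m x₀‖) ≤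
        M ^ N * Real.exp (|β| * N) * (Real.exp (β * ((n:ℝ) - m)) * ‖sol A m x₀‖) :=
      mul_le_mul_of_nonneg_right hC1 (by positivity)
    nlinarith [h6, h5]

lemma D2u_of_lt_lowerBohl (hA : BddSys A) {β : ℝ} {U : Submodule ℝ (Euc d)}
    (h : (β : EReal) < lowerBohl A U) : D2u A β U := by
  rw [lowerBohl_eq] at h
  obtain ⟨N, hN⟩ := lt_iSup_iff.mp h
  obtain ⟨c, hcb⟩ := hA.2
  set M : ℝ := max c 1 with hMdef
  have hM1 : (1:ℝ) ≤ M := le_max_right _ _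
  have hM : ∀ (n : ℕ) (x : Euc d), ‖(A n).symm x‖ ≤ M * ‖x‖ := by
    intro n x
    calc ‖(A n).symm x‖ = ‖(((A n).symm : Euc d →L[ℝ] Euc d)) x‖ := rfl
      _ ≤ ‖((A n).symm : Euc d →L[ℝ] Euc d)‖ * ‖x‖ :=
          ((A n).symm : Euc d →L[ℝ] Euc d).le_opNorm x
      _ ≤ M * ‖x‖ :=
          mul_le_mul_of_nonneg_right (le_trans (hcb n) (le_max_left _ _)) (norm_nonneg _)
  have hMN1 : (1:ℝ) ≤ M ^ N := by
    have := pow_le_pow_left₀ zero_le_one hM1 N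
    simpa using this
  have hMNpos : (0:ℝ) < M ^ N := by positivity
  refine ⟨(M ^ N)⁻¹ * Real.exp (-(|β| * N)), by positivity, ?_⟩
  intro m n hmn x₀ hxU
  by_cases hx0 : x₀ = 0
  · simp [hx0, sol_zero]
  have ht0 : (0:ℝ) ≤ (n:ℝ) - m := sub_nonneg.mpr (Nat.cast_le.mpr hmn)
  by_cases hgap : n - m ≤ N
  · have hge : ‖sol A m x₀‖ ≤ M ^ (n - m) * ‖sol A n x₀‖ := by
      have h0 := norm_sol_ge_pow A (by linarith : (0:ℝ) ≤ M) hM m (n - m) x₀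
      rwa [Nat.add_sub_cancel' hmn] at h0
    have h1 : M ^ (n - m) ≤ M ^ N := pow_le_pow_right₀ hM1 hgap
    have htN : (n:ℝ) - m ≤ N := by
      have h2 : ((n - m : ℕ) : ℝ) ≤ N := Nat.cast_le.mpr hgap
      rwa [Nat.cast_sub hmn] at h2
    have hup : ‖sol A m x₀‖ ≤ M ^ N * ‖sol A n x₀‖ :=
      le_trans hge (mul_le_mul_of_nonneg_right h1 (norm_nonneg _))
    have hexp : Real.exp (-(|β| * N) + β * ((n:ℝ) - m)) ≤ 1 := by
      rw [Real.exp_le_one_iff]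
      have h3 := mul_le_mul_of_nonneg_right (le_abs_self β) ht0
      nlinarith [abs_nonneg β]
    have hinv : (M ^ N)⁻¹ * ‖sol A m x₀‖ ≤ ‖sol A n x₀‖ := by
      rw [inv_mul_le_iff₀ hMNpos]; exact hup
    calc (M ^ N)⁻¹ * Real.exp (-(|β| * N)) * Real.exp (β * ((n:ℝ) - m)) * ‖sol A m x₀‖
        = (M ^ N)⁻¹ * Real.exp (-(|β| * N) + β * ((n:ℝ) - m)) * ‖sol A m x₀‖ := by
          rw [Real.exp_add]; ring
      _ ≤ (M ^ N)⁻¹ * 1 * ‖sol A m x₀‖ := by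
          have h0 : (0:ℝ) ≤ (M ^ N)⁻¹ := by positivity
          nlinarith [mul_nonneg h0 (norm_nonneg (sol A m x₀))]
      _ = (M ^ N)⁻¹ * ‖sol A m x₀‖ := by ring
      _ ≤ ‖sol A n x₀‖ := hinv
  · push_neg at hgap
    obtain ⟨ht1, htpos, hmle⟩ := cast_sub_pos hgap
    have hmpos : 0 < ‖sol A m x₀‖ := norm_pos_iff.mpr (sol_ne_zero A hx0 m)
    have hnpos : 0 < ‖sol A n x₀‖ := norm_pos_iff.mpr (sol_ne_zero A hx0 n)
    have hmem : ((((n : ℝ) - (m : ℝ))⁻¹ *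
        Real.log (‖sol A n x₀‖ / ‖sol A m x₀‖) : ℝ) : EReal) ∈ bohlSet A U N :=
      ⟨m, n, x₀, hxU, hx0, hgap, rfl⟩
    have hltr : β < ((n : ℝ) - (m : ℝ))⁻¹ * Real.log (‖sol A n x₀‖ / ‖sol A m x₀‖) := by
      exact_mod_cast lt_of_lt_of_le hN (sInf_le hmem)
    have hlog : β * ((n:ℝ) - m) < Real.log (‖sol A n x₀‖ / ‖sol A m x₀‖) := by
      have h4 := (mul_lt_mul_iff_right₀ htpos).mpr hltr
      rwa [← mul_assoc, mul_inv_cancel₀ (ne_of_gt htpos), one_mul, mul_comm ((n:ℝ) - m) β] at h4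
    have hr2 : Real.exp (β * ((n:ℝ) - m)) < ‖sol A n x₀‖ / ‖sol A m x₀‖ :=
      (Real.lt_log_iff_exp_lt (div_pos hnpos hmpos)).mp hlog
    have h5 : Real.exp (β * ((n:ℝ) - m)) * ‖sol A m x₀‖ < ‖sol A n x₀‖ :=
      (lt_div_iff₀ hmpos).mp hr2
    have hC1 : (M ^ N)⁻¹ * Real.exp (-(|β| * N)) ≤ 1 := by
      have e1 : (M ^ N)⁻¹ ≤ 1 := by
        rw [inv_le_one_iff₀]; right; exact hMN1
      have e2 : Real.exp (-(|β| * N)) ≤ 1 := by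
        rw [Real.exp_le_one_iff]
        have : (0:ℝ) ≤ |β| * N := by positivity
        linarith
      nlinarith [Real.exp_pos (-(|β| * N))]
    have h6 : (M ^ N)⁻¹ * Real.exp (-(|β| * N)) * (Real.exp (β * ((n:ℝ) - m)) * ‖sol A m x₀‖) ≤
        1 * (Real.exp (β * ((n:ℝ) - m)) * ‖sol A m x₀‖) :=
      mul_le_mul_of_nonneg_right hC1 (by positivity)
    nlinarith [h6, h5]

lemma D1u_mono {β β' : ℝ} {U : Submodule ℝ (Euc d)} (hβ : β ≤ β') (h : D1u A β U) :
    D1u A β' U := by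
  obtain ⟨C, hC, hD⟩ := h
  refine ⟨C, hC, fun m n hmn x₀ hxU => le_trans (hD m n hmn x₀ hxU) ?_⟩
  have ht : (0:ℝ) ≤ (n:ℝ) - m := sub_nonneg.mpr (Nat.cast_le.mpr hmn)
  have h7 := Real.exp_le_exp.mpr (mul_le_mul_of_nonneg_right hβ ht)
  exact mul_le_mul_of_nonneg_right (mul_le_mul_of_nonneg_left h7 hC.le) (norm_nonneg _)

lemma D2u_anti {β β' : ℝ} {U : Submodule ℝ (Euc d)} (hβ : β' ≤ β) (h : D2u A β U) :
    D2u A β' U := by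
  obtain ⟨C, hC, hD⟩ := h
  refine ⟨C, hC, fun m n hmn x₀ hxU => le_trans ?_ (hD m n hmn x₀ hxU)⟩
  have ht : (0:ℝ) ≤ (n:ℝ) - m := sub_nonneg.mpr (Nat.cast_le.mpr hmn)
  have h7 := Real.exp_le_exp.mpr (mul_le_mul_of_nonneg_right hβ ht)
  exact mul_le_mul_of_nonneg_right (mul_le_mul_of_nonneg_left h7 hC.le) (norm_nonneg _)

lemma exists_finrank_between (L : Submodule ℝ (Euc d)) (j : ℕ) :
    ∀ (nn : ℕ) (W : Submodule ℝ (Euc d)), W ≤ L → Module.finrank ℝ W + nn = j →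
      j ≤ Module.finrank ℝ L → ∃ U, W ≤ U ∧ U ∈ Gr j L := by
  intro nn
  induction nn with
  | zero => exact fun W hWL hW hj => ⟨W, le_refl _, hWL, by omega⟩
  | succ nn ih =>
      intro W hWL hW hj
      have hlt : Module.finrank ℝ W < Module.finrank ℝ L := by omega
      have hne : W ≠ L := fun h => by rw [h] at hlt; omega
      obtain ⟨x, hxL, hxW⟩ := SetLike.exists_of_lt (lt_of_le_of_ne hWL hne)
      have hx0 : x ≠ 0 := fun h => hxW (h ▸ W.zero_mem)
      have hdisj : W ⊓ (ℝ ∙ x) = ⊥ := by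
        rw [eq_bot_iff]
        rintro y hy
        rw [Submodule.mem_inf] at hy
        obtain ⟨hyW, hyx⟩ := hy
        obtain ⟨cc, rfl⟩ := Submodule.mem_span_singleton.mp hyx
        rcases eq_or_ne cc 0 with hcc | hcc
        · simp [hcc]
        · refine absurd ?_ hxW
          have h9 : cc⁻¹ • (cc • x) ∈ W := W.smul_mem cc⁻¹ hyW
          rwa [smul_smul, inv_mul_cancel₀ hcc, one_smul] at h9
      have hsup : Module.finrank ℝ ↥(W ⊔ (ℝ ∙ x)) = Module.finrank ℝ W + 1 := by
        have h0 := Submodule.finrank_sup_add_finrank_inf_eq W (ℝ ∙ x)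
        rw [hdisj, finrank_span_singleton hx0] at h0
        simpa using h0
      have hWL' : W ⊔ (ℝ ∙ x) ≤ L :=
        sup_le hWL ((Submodule.span_singleton_le_iff_mem x L).mpr hxL)
      obtain ⟨U, hU1, hU2⟩ := ih (W ⊔ (ℝ ∙ x)) hWL' (by omega) hj
      exact ⟨U, le_trans le_sup_left hU1, hU2⟩

lemma exists_mem_Gr {L : Submodule ℝ (Euc d)} {j : ℕ} (hj1 : 1 ≤ j)
    (hj2 : j ≤ Module.finrank ℝ L) {x : Euc d} (hx : x ∈ L) :
    ∃ U ∈ Gr j L, x ∈ U := by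
  have hspan : (ℝ ∙ x) ≤ L := (Submodule.span_singleton_le_iff_mem x L).mpr hx
  have hfr : Module.finrank ℝ ↥(ℝ ∙ x) ≤ 1 := by
    rcases eq_or_ne x 0 with h | h
    · subst h
      rw [Submodule.span_zero_singleton]
      simp
    · rw [finrank_span_singleton h]
  obtain ⟨U, hU1, hU2⟩ := exists_finrank_between L j (j - Module.finrank ℝ ↥(ℝ ∙ x))
    (ℝ ∙ x) hspan (by omega) hj2
  exact ⟨U, hU2, hU1 (Submodule.mem_span_singleton_self x)⟩

lemma isCover_Gr {L : Submodule ℝ (Euc d)} {j : ℕ}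
    (h : (j = 0 ∧ L = ⊥) ∨ (1 ≤ j ∧ j ≤ Module.finrank ℝ L)) : IsCover (Gr j L) L := by
  constructor
  · exact fun U hU => hU.1
  · apply Set.Subset.antisymm
    · intro x hx
      obtain ⟨U, hU, hxU⟩ := Set.mem_iUnion₂.mp hx
      exact hU.1 hxU
    · intro x hx
      rcases h with ⟨hj, hL⟩ | ⟨hj1, hj2⟩
      · subst hL; subst hj
        exact Set.mem_iUnion₂.mpr ⟨⊥, ⟨le_refl _, by simp⟩, hx⟩
      · obtain ⟨U, hU, hxU⟩ := exists_mem_Gr hj1 hj2 hx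
        exact Set.mem_iUnion₂.mpr ⟨U, hU, hxU⟩

lemma isCompl_of_disjoint_finrank {L1 L2 : Submodule ℝ (Euc d)}
    (hd : Disjoint L1 L2)
    (hsum : Module.finrank ℝ L1 + Module.finrank ℝ L2 = d) :
    IsCompl L1 L2 := by
  refine ⟨hd, codisjoint_iff.mpr ?_⟩
  apply Submodule.eq_top_of_finrank_eq
  have h1 := Submodule.finrank_sup_add_finrank_inf_eq L1 L2
  rw [disjoint_iff.mp hd] at h1
  have h2 : Module.finrank ℝ (Euc d) = d := finrank_euclideanSpace_fin
  simp only [finrank_bot] at h1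
  omega

end Aux

/-- **The dichotomy resolvent is the union of the spectral gap intervals.** -/
theorem dichotomy_resolvent_eq_union {d : ℕ} (hd : 1 ≤ d)
    (A : ℕ → (Euc d ≃L[ℝ] Euc d)) (hA : BddSys A)
    (J : ℕ → ℕ × ℕ) (hJ : ∀ k ≤ d, KAdmissible d k (J k).1 (J k).2) :
    dichRes A J = {γ : ℝ | ∃ k ≤ d,
      upperBohlLim A k (J k).1 < (γ : EReal) ∧ (γ : EReal) < lowerBohlLim A k (J k).2} := by
  ext γ
  simp only [dichRes, Set.mem_setOf_eq]
  constructor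
  · rintro ⟨L1, L2, hcompl, hcov1, hcov2, α, hα, h1, h2⟩
    set k := Module.finrank ℝ L1 with hk
    have hfr : Module.finrank ℝ (Euc d) = d := finrank_euclideanSpace_fin
    have hkd : k ≤ d := hfr ▸ Submodule.finrank_le L1
    have hL2 : Module.finrank ℝ L2 = d - k := by
      have h0 := Submodule.finrank_add_eq_of_isCompl hcompl
      rw [hfr] at h0; omega
    refine ⟨k, hkd, ?_, ?_⟩
    · have hub : upperBohlLim A k (J k).1 ≤ ((γ - α : ℝ) : EReal) := by
        refine le_trans (iInf₂_le L1 ?_) ?_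
        · exact hk.symm
        · exact iSup₂_le fun U hU => upperBohl_le_of_D1u A (h1 U hU)
      exact lt_of_le_of_lt hub (by exact_mod_cast sub_lt_self γ hα)
    · have hlb : ((γ + α : ℝ) : EReal) ≤ lowerBohlLim A k (J k).2 := by
        refine le_trans ?_ (le_iSup₂ L2 hL2)
        exact le_iInf₂ fun U hU => lowerBohl_ge_of_D2u A (h2 U hU)
      exact lt_of_lt_of_le (by exact_mod_cast lt_add_of_pos_right γ hα) hlb
  · rintro ⟨k, hkd, h1, h2⟩
    have h1' : ∃ L1 : Submodule ℝ (Euc d), Module.finrank ℝ L1 = k ∧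
        (⨆ U ∈ Gr (J k).1 L1, upperBohl A U) < (γ : EReal) := by
      rw [upperBohlLim] at h1
      obtain ⟨L, hL⟩ := iInf_lt_iff.mp h1
      obtain ⟨hmem, hlt⟩ := iInf_lt_iff.mp hL
      exact ⟨L, hmem, hlt⟩
    obtain ⟨L1, hL1k, hS1⟩ := h1'
    obtain ⟨β₁, hβ1a, hβ1b⟩ := EReal.exists_between_coe_real hS1
    have hβ1γ : β₁ < γ := by exact_mod_cast hβ1b
    have hD1 : ∀ U ∈ Gr (J k).1 L1, D1u A β₁ U := fun U hU =>
      D1u_of_upperBohl_lt A hA (lt_of_le_of_lt (le_iSup₂ (f := fun U _ => upperBohl A U) U hU) hβ1a)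
    have h2' : ∃ L2 : Submodule ℝ (Euc d), Module.finrank ℝ L2 = d - k ∧
        (γ : EReal) < ⨅ U ∈ Gr (J k).2 L2, lowerBohl A U := by
      rw [lowerBohlLim] at h2
      obtain ⟨L, hL⟩ := lt_iSup_iff.mp h2
      obtain ⟨hmem, hlt⟩ := lt_iSup_iff.mp hL
      exact ⟨L, hmem, hlt⟩
    obtain ⟨L2, hL2k, hS2⟩ := h2'
    obtain ⟨β₂, hβ2a, hβ2b⟩ := EReal.exists_between_coe_real hS2
    have hγβ2 : γ < β₂ := by exact_mod_cast hβ2a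
    have hD2 : ∀ U ∈ Gr (J k).2 L2, D2u A β₂ U := fun U hU =>
      D2u_of_lt_lowerBohl A hA (lt_of_lt_of_le hβ2b (iInf₂_le (f := fun U _ => lowerBohl A U) U hU))
    set α := min (γ - β₁) (β₂ - γ) with hαdef
    have hα : 0 < α := lt_min (by linarith) (by linarith)
    have hD1' : ∀ U ∈ Gr (J k).1 L1, D1u A (γ - α) U := fun U hU =>
      D1u_mono A (by have := min_le_left (γ - β₁) (β₂ - γ); linarith) (hD1 U hU)
    have hD2' : ∀ U ∈ Gr (J k).2 L2, D2u A (γ + α) U := fun U hU =>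
      D2u_anti A (by have := min_le_right (γ - β₁) (β₂ - γ); linarith) (hD2 U hU)
    obtain ⟨hadm0, hadmM, hadmD⟩ := hJ k hkd
    have hdisj : Disjoint L1 L2 := by
      rcases eq_or_ne k 0 with hk0 | hk0
      · have hb : L1 = ⊥ := Submodule.finrank_eq_zero.mp (by rw [hL1k, hk0])
        rw [hb]; exact disjoint_bot_left
      rcases eq_or_ne k d with hkd' | hkd'
      · have hb : L2 = ⊥ := Submodule.finrank_eq_zero.mp (by rw [hL2k, hkd']; omega)
        rw [hb]; exact disjoint_bot_right
      · obtain ⟨hj11, hj12, hj21, hj22⟩ := hadmM (by omega) (by omega)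
        rw [Submodule.disjoint_def]
        intro x hx1 hx2
        by_contra hx0
        obtain ⟨U1, hU1, hxU1⟩ := exists_mem_Gr hj11 (by rw [hL1k]; exact hj12) hx1
        obtain ⟨U2, hU2, hxU2⟩ := exists_mem_Gr hj21 (by rw [hL2k]; exact hj22) hx2
        obtain ⟨C1, hC1, hd1⟩ := hD1' U1 hU1
        obtain ⟨C2, hC2, hd2⟩ := hD2' U2 hU2
        obtain ⟨n, hn⟩ := exists_nat_gt ((C1 / C2 - 1) / (2 * α))
        have hxpos : 0 < ‖x‖ := norm_pos_iff.mpr hx0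
        have e1 := hd1 0 n (Nat.zero_le n) x hxU1
        have e2 := hd2 0 n (Nat.zero_le n) x hxU2
        rw [sol_time_zero] at e1 e2
        simp only [Nat.cast_zero, sub_zero] at e1 e2
        have key : C2 * Real.exp ((γ + α) * n) ≤ C1 * Real.exp ((γ - α) * n) := by
          have h3 := le_trans e2 e1
          exact le_of_mul_le_mul_right (by linarith [h3]) hxpos
        have hsplit : Real.exp ((γ + α) * n) =
            Real.exp ((γ - α) * n) * Real.exp (2 * α * n) := by
          rw [← Real.exp_add]; ring_nf
        have h2α : C2 * Real.exp (2 * α * n) ≤ C1 := by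
          have hp := Real.exp_pos ((γ - α) * n)
          rw [hsplit] at key
          have h4 : C2 * Real.exp (2 * α * n) * Real.exp ((γ - α) * n) ≤
              C1 * Real.exp ((γ - α) * n) := by linarith [key]
          exact le_of_mul_le_mul_right (by linarith [h4]) hp
        have hbig : C1 / C2 < 1 + 2 * α * n := by
          rw [div_lt_iff₀ (by positivity : (0:ℝ) < 2 * α)] at hn
          linarith
        have hexp : 1 + 2 * α * n ≤ Real.exp (2 * α * n) := by
          have := Real.add_one_le_exp (2 * α * n); linarith
        have hcontra : C1 < C2 * Real.exp (2 * α * n) := by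
          have h5 : C1 / C2 < Real.exp (2 * α * n) := lt_of_lt_of_le hbig hexp
          rw [div_lt_iff₀ hC2] at h5
          linarith [mul_comm C2 (Real.exp (2 * α * n))]
        linarith
    have hfr : Module.finrank ℝ (Euc d) = d := finrank_euclideanSpace_fin
    have hcompl : IsCompl L1 L2 := isCompl_of_disjoint_finrank hdisj (by omega)
    have hcov1 : IsCover (Gr (J k).1 L1) L1 := by
      apply isCover_Gr
      rcases eq_or_ne k 0 with hk0 | hk0
      · exact Or.inl ⟨(hadm0 hk0).1, Submodule.finrank_eq_zero.mp (by rw [hL1k, hk0])⟩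
      rcases eq_or_ne k d with hkd' | hkd'
      · obtain ⟨a, b, c'⟩ := hadmD hkd'
        exact Or.inr ⟨a, by rw [hL1k]; omega⟩
      · obtain ⟨a, b, _, _⟩ := hadmM (by omega) (by omega)
        exact Or.inr ⟨a, by rw [hL1k]; exact b⟩
    have hcov2 : IsCover (Gr (J k).2 L2) L2 := by
      apply isCover_Gr
      rcases eq_or_ne k 0 with hk0 | hk0
      · obtain ⟨_, b, c'⟩ := hadm0 hk0
        exact Or.inr ⟨b, by rw [hL2k]; omega⟩
      rcases eq_or_ne k d with hkd' | hkd'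
      · obtain ⟨_, _, c'⟩ := hadmD hkd'
        exact Or.inl ⟨c', Submodule.finrank_eq_zero.mp (by rw [hL2k, hkd']; omega)⟩
      · obtain ⟨_, _, a, b⟩ := hadmM (by omega) (by omega)
        exact Or.inr ⟨a, by rw [hL2k]; exact b⟩
    refine ⟨L1, L2, ?_⟩
    rw [hL1k]
    exact ⟨hcompl, hcov1, hcov2, α, hα, hD1', hD2'⟩

end
end
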